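/- Stability of the approximation along convergent sequences (Lemma 3.5(vii) of the paper): suppose in addition that f is continuous, and let (x_n)_{n ∈ ℕ} be a sequence in E with x_n → x as n → ∞. Then f_n(x_n) → f(x) as n → ∞ (where f_n denotes the inf-convolution with parameter n, real-valued for n ≥ C). -/

import Mathlib

open Filter Topology

/-!
The inf-convolution satisfies `f_t(y) ≤ f(y)`, which gives the upper bound by continuity of `f`.
For the lower bound, split the infimum at distance `δ` from `y`: near `y` the value of `f` is
controlled by continuity, while far from `y` the penalty `t‖y - a‖` beats the linear growth of `f`
once `t` is large, uniformly for `y` in a bounded set.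
-/

/-- Real-valued only when the range is bounded below (e.g. `t ≥ C` under linear growth);
otherwise `⨅` returns the junk value `0`. -/
noncomputable def lipschitzApprox {E : Type*} [NormedAddCommGroup E] (f : E → ℝ) (t : ℝ)
    (y : E) : ℝ :=
  ⨅ a, f a + t * ‖y - a‖

section

variable {E : Type*} [NormedAddCommGroup E] {f : E → ℝ} {C h t : ℝ}

theorem le_add_mul_norm_sub_of_growth (hC : 0 ≤ C) (hf : ∀ a, |f a| ≤ C * (h + ‖a‖))
    (y a : E) : -(C * (h + ‖y‖)) + (t - C) * ‖y - a‖ ≤ f a + t * ‖y - a‖ := by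
  have hfa : -(C * (h + ‖a‖)) ≤ f a := neg_le_of_abs_le (hf a)
  have hnorm : ‖a‖ ≤ ‖y‖ + ‖y - a‖ := norm_le_norm_add_norm_sub y a
  nlinarith [mul_le_mul_of_nonneg_left hnorm hC]

theorem bddBelow_range_add_mul_norm_sub (hC : 0 ≤ C) (hf : ∀ a, |f a| ≤ C * (h + ‖a‖))
    (htC : C ≤ t) (y : E) : BddBelow (Set.range fun a => f a + t * ‖y - a‖) := by
  refine ⟨-(C * (h + ‖y‖)), ?_⟩
  rintro _ ⟨a, rfl⟩
  have := le_add_mul_norm_sub_of_growth (t := t) hC hf y a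
  nlinarith [norm_nonneg (y - a)]

theorem lipschitzApprox_le_self {y : E} (hbdd : BddBelow (Set.range fun a => f a + t * ‖y - a‖)) :
    lipschitzApprox f t y ≤ f y :=
  (ciInf_le hbdd y).trans_eq (by simp)

theorem le_lipschitzApprox_of_forall_near {c δ : ℝ} {y : E} (hC : 0 ≤ C)
    (hf : ∀ a, |f a| ≤ C * (h + ‖a‖)) (htC : C ≤ t) (hnear : ∀ a, ‖a - y‖ < δ → c ≤ f a)
    (hfar : c + C * (h + ‖y‖) ≤ (t - C) * δ) : c ≤ lipschitzApprox f t y := by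
  refine le_ciInf fun a => ?_
  rcases lt_or_ge ‖a - y‖ δ with hlt | hge
  · have := hnear a hlt
    nlinarith [norm_nonneg (y - a)]
  · have := le_add_mul_norm_sub_of_growth (t := t) hC hf y a
    rw [norm_sub_rev] at hge
    nlinarith [mul_le_mul_of_nonneg_left hge (sub_nonneg.2 htC)]

variable {ι : Type*} {l : Filter ι} {τ : ι → ℝ} {y : ι → E} {x₀ : E}

theorem eventually_le_lipschitzApprox {c : ℝ} (hC : 0 ≤ C) (hf : ∀ a, |f a| ≤ C * (h + ‖a‖))
    (hcont : ContinuousAt f x₀) (hτ : Tendsto τ l atTop) (hy : Tendsto y l (𝓝 x₀))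
    (hc : c < f x₀) : ∀ᶠ i in l, c ≤ lipschitzApprox f (τ i) (y i) := by
  obtain ⟨δ, hδ, hfδ⟩ := Metric.eventually_nhds_iff.1 (hcont.eventually (lt_mem_nhds hc))
  have hpenalty : Tendsto (fun i => (τ i - C) * (δ / 2) - C * (h + ‖y i‖)) l atTop :=
    ((tendsto_atTop_add_const_right l (-C) hτ).atTop_mul_const (half_pos hδ)).atTop_add
      ((hy.norm.const_add h).const_mul C).neg
  filter_upwards [hpenalty.eventually_ge_atTop c, hτ.eventually_ge_atTop C,
    hy.eventually (Metric.ball_mem_nhds x₀ (half_pos hδ))] with i hgap hτC hyi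
  refine le_lipschitzApprox_of_forall_near hC hf hτC (δ := δ / 2) (fun a ha => (hfδ ?_).le) ?_
  · calc dist a x₀ ≤ dist a (y i) + dist (y i) x₀ := dist_triangle _ _ _
      _ < δ / 2 + δ / 2 := add_lt_add (by rwa [dist_eq_norm]) hyi
      _ = δ := add_halves δ
  · linarith

theorem tendsto_lipschitzApprox (hC : 0 ≤ C) (hf : ∀ a, |f a| ≤ C * (h + ‖a‖))
    (hcont : ContinuousAt f x₀) (hτ : Tendsto τ l atTop) (hy : Tendsto y l (𝓝 x₀)) :
    Tendsto (fun i => lipschitzApprox f (τ i) (y i)) l (𝓝 (f x₀)) := by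
  refine tendsto_order.2 ⟨fun c hc => ?_, fun c hc => ?_⟩
  · obtain ⟨c', hcc', hc'⟩ := exists_between hc
    filter_upwards [eventually_le_lipschitzApprox hC hf hcont hτ hy hc'] with i hi
    exact hcc'.trans_le hi
  · filter_upwards [hτ.eventually_ge_atTop C, (hcont.tendsto.comp hy).eventually (gt_mem_nhds hc)]
      with i hτC hlt
    exact (lipschitzApprox_le_self (bddBelow_range_add_mul_norm_sub hC hf hτC (y i))).trans_lt hlt

end

theorem stmt_5_general {E : Type*} [NormedAddCommGroup E]
    (C h : ℝ) (hC : 0 ≤ C)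
    (f : E → ℝ) (hf : ∀ a : E, |f a| ≤ C * (h + ‖a‖))
    (hcont : Continuous f)
    (x : ℕ → E) (x₀ : E) (hx : Tendsto x atTop (𝓝 x₀)) :
    Tendsto (fun n : ℕ => ⨅ a : E, f a + (n : ℝ) * ‖x n - a‖) atTop (𝓝 (f x₀)) :=
  tendsto_lipschitzApprox hC hf hcont.continuousAt tendsto_natCast_atTop_atTop hx

/-- Lemma 3.5(vii): stability of the Lipschitz approximation along convergent
sequences: if `f` is continuous with linear growth and `x_n → x`, then
`f_n(x_n) = ⨅ a, (f a + n‖x_n − a‖) → f(x)` as `n → ∞`. -/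
theorem stmt_5 {E : Type*} [NormedAddCommGroup E] [NormedSpace ℝ E]
    (C h : ℝ) (hC : 0 ≤ C) (hh : 0 ≤ h)
    (f : E → ℝ) (hf : ∀ a : E, |f a| ≤ C * (h + ‖a‖))
    (hcont : Continuous f)
    (x : ℕ → E) (x₀ : E) (hx : Tendsto x atTop (𝓝 x₀)) :
    Tendsto (fun n : ℕ => ⨅ a : E, f a + (n : ℝ) * ‖x n - a‖) atTop (𝓝 (f x₀)) :=
  stmt_5_general C h hC f hf hcont x x₀ hx
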